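/- Let m > 0 and α ≥ 1. For each n ≥ 0 define a_n := 2·inf { Σ_{i=1}^n (m/2)·y_i² + Σ_{i=1}^{n+1} (1/2)·(y_i − α·y_{i−1})² : y_0, y_1, …, y_{n+1} ∈ ℝ, y_0 = 0, y_{n+1} = 1 }. Then the sequence (a_n) converges, and lim_{n→∞} a_n = (−m − α² + 1 + √((m + α² − 1)² + 4m)) / 2. -/

import Mathlib

/-!
Dynamic programming: completing the square in the last free variable shows that the minimal cost
of a path from `y_0 = 0` to `y_{n+1} = w` is `c_n w² / 2`, where `c_0 = 1` and
`c_{n+1} = (c_n + m) / (c_n + m + α²)`. This Riccati map contracts `(0, ∞)` towards its positive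
fixed point, the positive root of `L² + (m + α² - 1) L - m = 0`, which is the stated limit.
-/

/-- The sequence `a_n`: twice the minimal cost of moving from `y_0 = 0` to `y_{n+1} = 1`
with hitting costs `(m/2)y_i²` (for `1 ≤ i ≤ n`) and switching costs
`(1/2)(y_i − α y_{i−1})²` (for `1 ≤ i ≤ n + 1`). -/
noncomputable def aSeq (m α : ℝ) (n : ℕ) : ℝ :=
  2 * sInf { r : ℝ | ∃ y : ℕ → ℝ, y 0 = 0 ∧ y (n + 1) = 1 ∧
    r = ∑ i ∈ Finset.Icc 1 n, m / 2 * (y i) ^ 2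
      + ∑ i ∈ Finset.Icc 1 (n + 1), 1 / 2 * (y i - α * y (i - 1)) ^ 2 }

open Filter Topology Finset

noncomputable section

namespace PathCost

variable {m α : ℝ}

def pathCost (m α : ℝ) (n : ℕ) (y : ℕ → ℝ) : ℝ :=
  ∑ i ∈ Icc 1 n, m / 2 * y i ^ 2 + ∑ i ∈ Icc 1 (n + 1), 1 / 2 * (y i - α * y (i - 1)) ^ 2

def riccatiStep (m α x : ℝ) : ℝ := (x + m) / (x + m + α ^ 2)

def riccatiSeq (m α : ℝ) : ℕ → ℝ
  | 0 => 1
  | n + 1 => riccatiStep m α (riccatiSeq m α n)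

lemma pathCost_zero (y : ℕ → ℝ) : pathCost m α 0 y = 1 / 2 * (y 1 - α * y 0) ^ 2 := by
  simp [pathCost]

lemma pathCost_succ (n : ℕ) (y : ℕ → ℝ) :
    pathCost m α (n + 1) y = pathCost m α n y + m / 2 * y (n + 1) ^ 2
      + 1 / 2 * (y (n + 2) - α * y (n + 1)) ^ 2 := by
  simp only [pathCost, sum_Icc_succ_top (by omega : 1 ≤ n + 1),
    sum_Icc_succ_top (by omega : 1 ≤ n + 2), Nat.add_sub_cancel]
  ring

lemma pathCost_congr {n : ℕ} {y y' : ℕ → ℝ} (h : ∀ i ≤ n + 1, y i = y' i) :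
    pathCost m α n y = pathCost m α n y' := by
  unfold pathCost
  congr 1
  · exact sum_congr rfl fun i hi => by rw [h i (by simp only [mem_Icc] at hi; omega)]
  · exact sum_congr rfl fun i hi => by
      rw [h i (by simp only [mem_Icc] at hi; omega), h (i - 1) (by simp only [mem_Icc] at hi; omega)]

lemma riccatiSeq_pos (hm : 0 < m) (n : ℕ) : 0 < riccatiSeq m α n := by
  induction n with
  | zero => exact one_pos
  | succ n ih => exact div_pos (by linarith) (by positivity)

lemma add_sq_sub_mul_eq {A : ℝ} (hA : A + α ^ 2 ≠ 0) (z w : ℝ) :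
    A * z ^ 2 + (w - α * z) ^ 2
      = A / (A + α ^ 2) * w ^ 2 + (A + α ^ 2) * (z - α * w / (A + α ^ 2)) ^ 2 := by
  field_simp
  ring

lemma riccatiSeq_mul_sq_le_pathCost (hm : 0 < m) (n : ℕ) {y : ℕ → ℝ} (h0 : y 0 = 0) :
    riccatiSeq m α n / 2 * y (n + 1) ^ 2 ≤ pathCost m α n y := by
  induction n with
  | zero => simp [pathCost_zero, riccatiSeq, h0]
  | succ n ih =>
    have hA : 0 < riccatiSeq m α n + m + α ^ 2 := by
      have := riccatiSeq_pos (α := α) hm n; positivity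
    have hsq := add_sq_sub_mul_eq hA.ne' (y (n + 1)) (y (n + 2))
    have : 0 ≤ (riccatiSeq m α n + m + α ^ 2)
        * (y (n + 1) - α * y (n + 2) / (riccatiSeq m α n + m + α ^ 2)) ^ 2 := by positivity
    rw [pathCost_succ, riccatiSeq, riccatiStep]
    linarith

lemma exists_pathCost_eq (hm : 0 < m) (n : ℕ) (w : ℝ) :
    ∃ y : ℕ → ℝ, y 0 = 0 ∧ y (n + 1) = w ∧ pathCost m α n y = riccatiSeq m α n / 2 * w ^ 2 := by
  induction n generalizing w with
  | zero =>
    refine ⟨fun i => if i = 0 then 0 else w, rfl, rfl, ?_⟩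
    simp [pathCost_zero, riccatiSeq]
  | succ n ih =>
    set A := riccatiSeq m α n + m
    have hA : 0 < A + α ^ 2 := by
      have := riccatiSeq_pos (α := α) hm n; positivity
    obtain ⟨y, h0, hz, hy⟩ := ih (α * w / (A + α ^ 2))
    refine ⟨Function.update y (n + 2) w, by simp [h0], by simp, ?_⟩
    have hsq := add_sq_sub_mul_eq hA.ne' (α * w / (A + α ^ 2)) w
    rw [pathCost_succ, pathCost_congr (y' := y) fun i hi => by simp [show i ≠ n + 2 by omega],
      hy, riccatiSeq, riccatiStep]
    simp only [Function.update_self, ne_eq, show n + 1 ≠ n + 2 by omega, not_false_eq_true,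
      Function.update_of_ne, hz, sub_self, zero_pow two_ne_zero, mul_zero, add_zero] at hsq ⊢
    linarith

lemma aSeq_eq_riccatiSeq (hm : 0 < m) (n : ℕ) : aSeq m α n = riccatiSeq m α n := by
  have hleast : IsLeast {r | ∃ y : ℕ → ℝ, y 0 = 0 ∧ y (n + 1) = 1 ∧ r = pathCost m α n y}
      (riccatiSeq m α n / 2) := by
    refine ⟨?_, ?_⟩
    · obtain ⟨y, h0, h1, hy⟩ := exists_pathCost_eq (α := α) hm n 1
      exact ⟨y, h0, h1, by rw [hy, one_pow, mul_one]⟩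
    · rintro r ⟨y, h0, h1, rfl⟩
      simpa [h1] using riccatiSeq_mul_sq_le_pathCost hm n h0
  change 2 * sInf {r | ∃ y : ℕ → ℝ, y 0 = 0 ∧ y (n + 1) = 1 ∧ r = pathCost m α n y} = _
  rw [hleast.csInf_eq]
  ring

lemma riccatiStep_sub_riccatiStep {x x' : ℝ} (hx : x + m + α ^ 2 ≠ 0)
    (hx' : x' + m + α ^ 2 ≠ 0) :
    riccatiStep m α x - riccatiStep m α x'
      = α ^ 2 * (x - x') / ((x + m + α ^ 2) * (x' + m + α ^ 2)) := by
  unfold riccatiStep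
  field_simp
  ring

lemma abs_riccatiStep_sub_le (hm : 0 < m) {L x : ℝ} (hL : 0 < L) (hfix : riccatiStep m α L = L)
    (hx : 0 < x) :
    |riccatiStep m α x - L| ≤ α ^ 2 / ((m + α ^ 2) * (L + m + α ^ 2)) * |x - L| := by
  have hxd : 0 < x + m + α ^ 2 := by positivity
  have hLd : 0 < L + m + α ^ 2 := by positivity
  conv_lhs => rw [← hfix, riccatiStep_sub_riccatiStep hxd.ne' hLd.ne', abs_div, abs_mul,
    abs_of_nonneg (sq_nonneg α), abs_of_pos (mul_pos hxd hLd), mul_div_right_comm]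
  gcongr
  linarith

lemma riccatiRate_lt_one (hm : 0 < m) {L : ℝ} (hL : 0 < L) (hfix : riccatiStep m α L = L) :
    α ^ 2 / ((m + α ^ 2) * (L + m + α ^ 2)) < 1 := by
  have hLd : 0 < L + m + α ^ 2 := by positivity
  have hfix' : L * (L + m + α ^ 2) = L + m := by
    rw [riccatiStep, div_eq_iff hLd.ne'] at hfix; linarith
  rw [div_lt_one (by positivity)]
  -- by `hfix'`, `L ((m + α²)(L + m + α²) - α²) = m L + m² + m α² > 0`
  nlinarith [mul_pos hm hL, mul_pos hm hm, mul_nonneg hm.le (sq_nonneg α)]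

lemma tendsto_of_abs_sub_le_mul {u : ℕ → ℝ} {L q : ℝ} (hq0 : 0 ≤ q) (hq1 : q < 1)
    (h : ∀ n, |u (n + 1) - L| ≤ q * |u n - L|) : Tendsto u atTop (𝓝 L) := by
  have hgeom : ∀ n, |u n - L| ≤ q ^ n * |u 0 - L| := by
    intro n
    induction n with
    | zero => simp
    | succ n ih =>
      calc |u (n + 1) - L| ≤ q * |u n - L| := h n
        _ ≤ q * (q ^ n * |u 0 - L|) := by gcongr
        _ = q ^ (n + 1) * |u 0 - L| := by ring
  rw [tendsto_iff_dist_tendsto_zero]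
  refine squeeze_zero (fun n => dist_nonneg) hgeom ?_
  simpa using (tendsto_pow_atTop_nhds_zero_of_lt_one hq0 hq1).mul_const |u 0 - L|

lemma tendsto_riccatiSeq (hm : 0 < m) {L : ℝ} (hL : 0 < L) (hfix : riccatiStep m α L = L) :
    Tendsto (riccatiSeq m α) atTop (𝓝 L) :=
  tendsto_of_abs_sub_le_mul (by positivity) (riccatiRate_lt_one hm hL hfix) fun n =>
    abs_riccatiStep_sub_le hm hL hfix (riccatiSeq_pos hm n)

end PathCost

end

open PathCost in
theorem stmt10 (m α : ℝ) (hm : 0 < m) :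
    Filter.Tendsto (aSeq m α) Filter.atTop
      (nhds ((-m - α ^ 2 + 1 + Real.sqrt ((m + α ^ 2 - 1) ^ 2 + 4 * m)) / 2)) := by
  have hr0 := Real.sqrt_nonneg ((m + α ^ 2 - 1) ^ 2 + 4 * m)
  have hr2 := Real.sq_sqrt (by positivity : 0 ≤ (m + α ^ 2 - 1) ^ 2 + 4 * m)
  generalize Real.sqrt ((m + α ^ 2 - 1) ^ 2 + 4 * m) = r at hr0 hr2 ⊢
  have hL : 0 < (-m - α ^ 2 + 1 + r) / 2 := by nlinarith
  have hfix : riccatiStep m α ((-m - α ^ 2 + 1 + r) / 2) = (-m - α ^ 2 + 1 + r) / 2 := by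
    rw [riccatiStep, div_eq_iff (by positivity)]
    linear_combination -hr2 / 4
  exact (tendsto_riccatiSeq hm hL hfix).congr fun n => (aSeq_eq_riccatiSeq hm n).symm
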